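/- Let n ≥ 1 and let F : ℝⁿ → ℝ be the Cayley polynomial F(x₁,…,x_n) = Σ_{d=2}^{n+1} ((-1)^d / d) Σ_{(i₁,…,i_d) ∈ {1,…,n}^d, i₁+⋯+i_d = n+1} x_{i₁}⋯x_{i_d} (the inner sum runs over all ordered d-tuples). Then the partial derivatives of F at the origin satisfy: ∂²F/∂x_α∂x_β(0) = 1 if α+β = n+1 and 0 otherwise, and ∂³F/∂x_α∂x_β∂x_δ(0) = -2 if α+β+δ = n+1 and 0 otherwise. Consequently the difference-tensor algebra of F at 0 is the Cayley algebra of dimension n: the multiplication determined by D²F(0)(u∙v,w) = -(1/2)D³F(0)(u,v,w) is (u∙v)_m = Σ_{k=1}^{m-1} u_k v_{m-k}, and its trace form γ = D²F(0) is γ(u,v) = Σ_{k=1}^{n} u_k v_{n+1-k}. -/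

import Mathlib

open scoped BigOperators

namespace CayleyAux

abbrev En (n : ℕ) := EuclideanSpace ℝ (Fin n)

noncomputable def B (n d : ℕ) :
    ContinuousMultilinearMap ℝ (fun _ : Fin d => En n) ℝ :=
  ∑ t ∈ Finset.univ.filter (fun t : Fin d → Fin n => ∑ j, ((t j : ℕ) + 1) = n + 1),
    (ContinuousMultilinearMap.mkPiAlgebra ℝ (Fin d) ℝ).compContinuousLinearMap
      (fun j => EuclideanSpace.proj (t j))

lemma B_apply (n d : ℕ) (v : Fin d → En n) :
    B n d v = ∑ t ∈ Finset.univ.filter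
        (fun t : Fin d → Fin n => ∑ j, ((t j : ℕ) + 1) = n + 1),
      ∏ j, v j (t j) := by
  simp [B, ContinuousMultilinearMap.sum_apply]

noncomputable def diag (n d : ℕ) : En n →L[ℝ] (Fin d → En n) :=
  ContinuousLinearMap.pi fun _ => ContinuousLinearMap.id ℝ (En n)

@[simp] lemma diag_apply (n d : ℕ) (x : En n) (j : Fin d) : diag n d x j = x := rfl

lemma B_perm (n d : ℕ) (σ : Equiv.Perm (Fin d)) (v : Fin d → En n) :
    B n d (fun j => v (σ j)) = B n d v := by
  rw [B_apply, B_apply]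
  refine Finset.sum_nbij' (fun t => t ∘ σ.symm) (fun t => t ∘ σ) ?_ ?_ ?_ ?_ ?_
  · intro t ht
    simp only [Finset.mem_filter, Finset.mem_univ, true_and, Function.comp] at ht ⊢
    rw [Equiv.sum_comp σ.symm (fun j => ((t j : ℕ) + 1))]
    exact ht
  · intro t ht
    simp only [Finset.mem_filter, Finset.mem_univ, true_and, Function.comp] at ht ⊢
    rw [Equiv.sum_comp σ (fun j => ((t j : ℕ) + 1))]
    exact ht
  · intro t _; funext j; simp
  · intro t _; funext j; simp
  · intro t _
    rw [← Equiv.prod_comp σ (fun j => v j ((t ∘ σ.symm) j))]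
    exact Finset.prod_congr rfl fun j _ => by rw [Function.comp, Equiv.symm_apply_apply]

end CayleyAux
namespace CayleyAux2

lemma cmm_deriv_zero_of_ne {d k : ℕ} {E' : Type*} [NormedAddCommGroup E'] [NormedSpace ℝ E']
    (f : ContinuousMultilinearMap ℝ (fun _ : Fin d => E') ℝ) (h : k ≠ d)
    (v : Fin k → (Fin d → E')) :
    iteratedFDeriv ℝ k (⇑f) 0 v = 0 := by
  classical
  rw [congrFun (f.iteratedFDeriv_eq k) 0]
  simp only [ContinuousMultilinearMap.iteratedFDeriv, ContinuousMultilinearMap.sum_apply, map_zero]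
  refine Finset.sum_eq_zero fun e _ => ?_
  have hsur : ¬ Function.Surjective e := by
    intro hs
    exact h (by simpa using Fintype.card_of_bijective ⟨e.injective, hs⟩)
  simp only [Function.Surjective, not_forall] at hsur
  obtain ⟨j₀, hj₀⟩ := hsur
  push_neg at hj₀
  rw [ContinuousMultilinearMap.iteratedFDerivComponent_apply]
  refine f.map_coord_zero j₀ ?_
  rw [dif_neg (by simpa using fun i => (hj₀ i).symm ∘ Eq.symm)]
  rfl

lemma cmm_deriv_zero_diag {d : ℕ} {E' : Type*} [NormedAddCommGroup E'] [NormedSpace ℝ E']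
    (f : ContinuousMultilinearMap ℝ (fun _ : Fin d => E') ℝ)
    (v : Fin d → (Fin d → E')) :
    iteratedFDeriv ℝ d (⇑f) 0 v = ∑ σ : Equiv.Perm (Fin d), f (fun j => v (σ j) j) := by
  classical
  rw [congrFun (f.iteratedFDeriv_eq d) 0]
  simp only [ContinuousMultilinearMap.iteratedFDeriv, ContinuousMultilinearMap.sum_apply, map_zero,
    ContinuousMultilinearMap.iteratedFDerivComponent_apply]
  refine (Fintype.sum_bijective (fun σ : Equiv.Perm (Fin d) => σ.symm.toEmbedding) ?_ _ _ ?_).symm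
  · constructor
    · intro σ₁ σ₂ h12
      have : σ₁.symm = σ₂.symm := by
        ext x
        exact congrArg Fin.val (by simpa using DFunLike.congr_fun h12 x)
      simpa using congrArg Equiv.symm this
    · intro e
      have hbe : Function.Bijective e := (Finite.injective_iff_bijective).1 e.injective
      refine ⟨(Equiv.ofBijective e hbe).symm, ?_⟩
      ext x
      simp [Equiv.ofBijective]
  · intro σ
    congr 1
    funext j
    have hmem : j ∈ Set.range σ.symm.toEmbedding := ⟨σ j, by simp⟩
    rw [dif_pos hmem]
    congr! 2
    rw [Equiv.eq_symm_apply]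
    exact Subtype.ext (by simp [Function.Embedding.toEquivRange])

end CayleyAux2

/-- The Cayley polynomial
`F(x₁,…,x_n) = Σ_{d=2}^{n+1} ((-1)^d/d) Σ_{i₁+⋯+i_d = n+1} x_{i₁}⋯x_{i_d}`,
where the inner sum runs over all ordered `d`-tuples of indices in `{1,…,n}` (here 0-indexed,
so the tuple condition reads `Σ_j (i_j + 1) = n + 1`). -/
noncomputable def cayleyF (n : ℕ) (x : EuclideanSpace ℝ (Fin n)) : ℝ :=
  ∑ d ∈ Finset.Icc 2 (n + 1), ((-1 : ℝ)) ^ d / (d : ℝ) *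
    ∑ t ∈ Finset.univ.filter (fun t : Fin d → Fin n => ∑ j, ((t j : ℕ) + 1) = n + 1),
      ∏ j, x (t j)

namespace CayleyAux3
open CayleyAux CayleyAux2

lemma filter_empty (n d : ℕ) (h : n + 1 < d) :
    Finset.univ.filter (fun t : Fin d → Fin n => ∑ j, ((t j : ℕ) + 1) = n + 1)
      = (∅ : Finset (Fin d → Fin n)) := by
  refine Finset.filter_false_of_mem fun t _ => ?_
  intro heq
  have : d ≤ ∑ j, ((t j : ℕ) + 1) := by
    calc d = ∑ _j : Fin d, 1 := by simp
    _ ≤ _ := Finset.sum_le_sum fun j _ => by omega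
  omega

lemma cayley_deriv (n k : ℕ) (hk : 2 ≤ k) (v : Fin k → En n) :
    iteratedFDeriv ℝ k (cayleyF n) 0 v =
      ((-1 : ℝ) ^ k / (k : ℝ)) * (Nat.factorial k : ℝ) *
        ∑ t ∈ Finset.univ.filter
            (fun t : Fin k → Fin n => ∑ j, ((t j : ℕ) + 1) = n + 1),
          ∏ j, v j (t j) := by
  classical
  set g : ℕ → En n → ℝ :=
    fun d x => ((-1 : ℝ) ^ d / (d : ℝ)) • ((B n d : ContinuousMultilinearMap ℝ _ ℝ) ∘
      (diag n d)) x with hg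
  have hgc : ∀ d ∈ Finset.Icc 2 (n + 1), ContDiff ℝ k (g d) := by
    intro d _
    exact (((B n d).contDiff.comp (diag n d).contDiff).const_smul _ : ContDiff ℝ (⊤ : ℕ∞) _).of_le (by exact_mod_cast le_top)
  have hF : cayleyF n = fun x => ∑ d ∈ Finset.Icc 2 (n + 1), g d x := by
    funext x
    rw [cayleyF]
    refine Finset.sum_congr rfl fun d _ => ?_
    simp [hg, B_apply, smul_eq_mul]
  rw [hF, iteratedFDeriv_sum hgc]
  simp only [Finset.sum_apply, ContinuousMultilinearMap.sum_apply]
  have hterm : ∀ d ∈ Finset.Icc 2 (n + 1),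
      iteratedFDeriv ℝ k (g d) 0 v =
        if d = k then ((-1 : ℝ) ^ k / (k : ℝ)) * (Nat.factorial k : ℝ) *
          ∑ t ∈ Finset.univ.filter
              (fun t : Fin k → Fin n => ∑ j, ((t j : ℕ) + 1) = n + 1),
            ∏ j, v j (t j)
        else 0 := by
    intro d _
    have hsm : g d = ((-1 : ℝ) ^ d / (d : ℝ)) •
        ((B n d : ContinuousMultilinearMap ℝ _ ℝ) ∘ (diag n d)) := rfl
    rw [hsm, iteratedFDeriv_const_smul_apply
      (((B n d).contDiff.comp (diag n d).contDiff).of_le le_top).contDiffAt]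
    have hcr := ContinuousLinearMap.iteratedFDeriv_comp_right (diag n d)
      ((B n d).contDiff) 0 (i := k) le_top
    rw [Function.comp_def] at hcr ⊢
    rw [hcr]
    simp only [map_zero, ContinuousMultilinearMap.compContinuousLinearMap_apply,
      ContinuousMultilinearMap.smul_apply]
    by_cases hdk : d = k
    · subst hdk
      rw [if_pos rfl, cmm_deriv_zero_diag]
      have : ∀ σ : Equiv.Perm (Fin d), (B n d) (fun j => diag n d (v (σ j)) j) = B n d v := by
        intro σ
        have : (fun j => diag n d (v (σ j)) j) = fun j => v (σ j) := by
          funext j; rfl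
        rw [this, B_perm]
      rw [Finset.sum_congr rfl fun σ _ => this σ, Finset.sum_const, Finset.card_univ,
        Fintype.card_perm, Fintype.card_fin, B_apply]
      simp only [smul_eq_mul, nsmul_eq_mul]
      ring
    · rw [if_neg hdk, cmm_deriv_zero_of_ne _ (fun hkd => hdk hkd.symm), smul_zero]
  rw [Finset.sum_congr rfl hterm, Finset.sum_ite_eq' (Finset.Icc 2 (n + 1)) k]
  by_cases hmem : k ∈ Finset.Icc 2 (n + 1)
  · rw [if_pos hmem]
  · rw [if_neg hmem]
    have hnk : n + 1 < k := by
      simp only [Finset.mem_Icc, not_and, not_le] at hmem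
      exact hmem hk
    rw [filter_empty n k hnk]
    simp

end CayleyAux3

namespace CayleyAux4
open CayleyAux CayleyAux2 CayleyAux3

lemma D2 (n : ℕ) (u w : En n) :
    iteratedFDeriv ℝ 2 (cayleyF n) 0 ![u, w] = ∑ i : Fin n, u i * w i.rev := by
  rw [cayley_deriv n 2 le_rfl]
  have h1 : ∀ t : Fin 2 → Fin n, (∏ j, (![u, w] j) (t j)) = u (t 0) * w (t 1) := by
    intro t; rw [Fin.prod_univ_two]; rfl
  rw [Finset.sum_congr rfl fun t _ => h1 t]
  rw [show ((-1 : ℝ) ^ 2 / ((2 : ℕ) : ℝ)) * ((Nat.factorial 2 : ℕ) : ℝ) = 1 by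
    norm_num [Nat.factorial], one_mul]
  refine Finset.sum_nbij' (fun t => t 0) (fun i => ![i, i.rev]) ?_ ?_ ?_ ?_ ?_
  · intro t _; exact Finset.mem_univ _
  · intro i _
    simp only [Finset.mem_filter, Finset.mem_univ, true_and, Fin.sum_univ_two,
      Matrix.cons_val_zero, Matrix.cons_val_one, Matrix.head_cons, Fin.val_rev]
    have := i.isLt
    omega
  · intro t ht
    simp only [Finset.mem_filter, Finset.mem_univ, true_and, Fin.sum_univ_two] at ht
    have h0 := (t 0).isLt
    have h1' := (t 1).isLt
    have hrev : (t 0).rev = t 1 := by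
      ext; rw [Fin.val_rev]; omega
    funext j
    fin_cases j <;> simp [hrev]
  · intro i _; simp
  · intro t ht
    simp only [Finset.mem_filter, Finset.mem_univ, true_and, Fin.sum_univ_two] at ht
    have h0 := (t 0).isLt
    have h1' := (t 1).isLt
    have hrev : (t 0).rev = t 1 := by ext; rw [Fin.val_rev]; omega
    rw [← hrev]

lemma D3 (n : ℕ) (u v w : En n) :
    iteratedFDeriv ℝ 3 (cayleyF n) 0 ![u, v, w] =
      -2 * ∑ t ∈ Finset.univ.filter
          (fun t : Fin 3 → Fin n => ∑ j, ((t j : ℕ) + 1) = n + 1),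
        u (t 0) * v (t 1) * w (t 2) := by
  rw [cayley_deriv n 3 (by norm_num)]
  have h1 : ∀ t : Fin 3 → Fin n,
      (∏ j, (![u, v, w] j) (t j)) = u (t 0) * v (t 1) * w (t 2) := by
    intro t; rw [Fin.prod_univ_three]; rfl
  rw [Finset.sum_congr rfl fun t _ => h1 t,
    show ((-1 : ℝ) ^ 3 / ((3 : ℕ) : ℝ)) * ((Nat.factorial 3 : ℕ) : ℝ) = -2 by
      norm_num [Nat.factorial]]

end CayleyAux4

open CayleyAux CayleyAux2 CayleyAux3 CayleyAux4 in
/-- the second and third partial derivatives of the Cayley polynomial at the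
origin are `∂²F/∂x_α∂x_β(0) = 1` iff `α+β = n+1` (else `0`) and
`∂³F/∂x_α∂x_β∂x_δ(0) = -2` iff `α+β+δ = n+1` (else `0`); consequently the difference-tensor
algebra of `F` at `0` is the Cayley algebra: any multiplication `mul` with
`D²F(0)(mul u v, w) = -(1/2) D³F(0)(u,v,w)` is given by `(u∙v)_m = Σ_{k=1}^{m-1} u_k v_{m-k}`,
and the trace form `γ = D²F(0)` is `γ(u,v) = Σ_{k=1}^n u_k v_{n+1-k}`. -/
theorem stmt_14 (n : ℕ) (hn : 1 ≤ n) :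
    (∀ α β : Fin n,
      iteratedFDeriv ℝ 2 (cayleyF n) 0
          ![EuclideanSpace.single α 1, EuclideanSpace.single β 1] =
        if (α : ℕ) + (β : ℕ) + 2 = n + 1 then 1 else 0) ∧
    (∀ α β δ : Fin n,
      iteratedFDeriv ℝ 3 (cayleyF n) 0
          ![EuclideanSpace.single α 1, EuclideanSpace.single β 1, EuclideanSpace.single δ 1] =
        if (α : ℕ) + (β : ℕ) + (δ : ℕ) + 3 = n + 1 then -2 else 0) ∧
    (∀ mul : EuclideanSpace ℝ (Fin n) → EuclideanSpace ℝ (Fin n) → EuclideanSpace ℝ (Fin n),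
      (∀ u v w, iteratedFDeriv ℝ 2 (cayleyF n) 0 ![mul u v, w] =
        -(1/2) * iteratedFDeriv ℝ 3 (cayleyF n) 0 ![u, v, w]) →
      ∀ u v : EuclideanSpace ℝ (Fin n), ∀ m : Fin n,
        mul u v m = ∑ p ∈ Finset.univ.filter
          (fun p : Fin n × Fin n => (p.1 : ℕ) + (p.2 : ℕ) + 1 = (m : ℕ)), u p.1 * v p.2) ∧
    (∀ u v : EuclideanSpace ℝ (Fin n),
      iteratedFDeriv ℝ 2 (cayleyF n) 0 ![u, v] = ∑ i : Fin n, u i * v i.rev) := by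
  have hD2 : ∀ u w : EuclideanSpace ℝ (Fin n),
      iteratedFDeriv ℝ 2 (cayleyF n) 0 ![u, w] = ∑ i : Fin n, u i * w i.rev := D2 n
  refine ⟨?_, ?_, ?_, fun u v => hD2 u v⟩
  · -- part A
    intro α β
    rw [hD2]
    have hcond : (Fin.rev α = β) ↔ ((α : ℕ) + (β : ℕ) + 2 = n + 1) := by
      rw [Fin.ext_iff, Fin.val_rev]
      have := α.isLt; have := β.isLt
      omega
    calc ∑ i : Fin n, (EuclideanSpace.single α (1:ℝ)) i * (EuclideanSpace.single β (1:ℝ)) i.rev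
        = ∑ i : Fin n, if i = α then (EuclideanSpace.single β (1:ℝ)) i.rev else 0 := by
          refine Finset.sum_congr rfl fun i _ => ?_
          rw [EuclideanSpace.single_apply]
          split_ifs <;> simp
      _ = (EuclideanSpace.single β (1:ℝ)) α.rev := by
          rw [Finset.sum_ite_eq' Finset.univ α]
          simp
      _ = if (α : ℕ) + (β : ℕ) + 2 = n + 1 then 1 else 0 := by
          rw [EuclideanSpace.single_apply, if_congr hcond rfl rfl]
  · -- part B
    intro α β δ
    rw [D3]
    have key : ∀ t : Fin 3 → Fin n,
        (EuclideanSpace.single α (1:ℝ)) (t 0) * (EuclideanSpace.single β (1:ℝ)) (t 1) *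
          (EuclideanSpace.single δ (1:ℝ)) (t 2) = if t = ![α, β, δ] then 1 else 0 := by
      intro t
      simp only [EuclideanSpace.single_apply]
      by_cases h : t = ![α, β, δ]
      · subst h; simp
      · rw [if_neg h]
        by_cases h0 : t 0 = α
        · by_cases h1 : t 1 = β
          · by_cases h2 : t 2 = δ
            · exfalso; apply h; funext j; fin_cases j <;> simp [h0, h1, h2]
            · simp [h2]
          · simp [h1]
        · simp [h0]
    rw [Finset.sum_congr rfl fun t _ => key t, Finset.sum_ite_eq' _ ![α, β, δ]]
    have hmem : (![α, β, δ] ∈ Finset.univ.filter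
        (fun t : Fin 3 → Fin n => ∑ j, ((t j : ℕ) + 1) = n + 1)) ↔
        ((α : ℕ) + (β : ℕ) + (δ : ℕ) + 3 = n + 1) := by
      simp only [Finset.mem_filter, Finset.mem_univ, true_and, Fin.sum_univ_three,
        Matrix.cons_val_zero, Matrix.cons_val_one, Matrix.head_cons, Matrix.cons_val_two,
        Matrix.tail_cons]
      omega
    rw [if_congr hmem rfl rfl]
    split_ifs <;> norm_num
  · -- part C
    intro mul hmul u v m
    have h0 := hmul u v (EuclideanSpace.single m.rev 1)
    rw [hD2, D3] at h0
    have hL : ∑ i : Fin n, mul u v i * (EuclideanSpace.single m.rev (1:ℝ)) i.rev = mul u v m := by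
      calc ∑ i : Fin n, mul u v i * (EuclideanSpace.single m.rev (1:ℝ)) i.rev
          = ∑ i : Fin n, if i = m then mul u v i else 0 := by
            refine Finset.sum_congr rfl fun i _ => ?_
            rw [EuclideanSpace.single_apply, if_congr (Fin.rev_inj) rfl rfl, mul_ite, mul_one,
              mul_zero]
        _ = mul u v m := by rw [Finset.sum_ite_eq' Finset.univ m]; simp
    rw [hL] at h0
    set S3 := ∑ t ∈ Finset.univ.filter
        (fun t : Fin 3 → Fin n => ∑ j, ((t j : ℕ) + 1) = n + 1),
      u (t 0) * v (t 1) * (EuclideanSpace.single m.rev (1:ℝ)) (t 2) with hS3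
    have h1 : mul u v m = S3 := by rw [h0]; ring
    rw [h1, hS3]
    calc (∑ t ∈ Finset.univ.filter
            (fun t : Fin 3 → Fin n => ∑ j, ((t j : ℕ) + 1) = n + 1),
          u (t 0) * v (t 1) * (EuclideanSpace.single m.rev (1:ℝ)) (t 2))
        = ∑ t ∈ Finset.univ.filter
            (fun t : Fin 3 → Fin n => ∑ j, ((t j : ℕ) + 1) = n + 1),
          (if t 2 = m.rev then u (t 0) * v (t 1) else 0) := by
          refine Finset.sum_congr rfl fun t _ => ?_
          rw [EuclideanSpace.single_apply, mul_ite, mul_one, mul_zero]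
      _ = ∑ t ∈ (Finset.univ.filter
            (fun t : Fin 3 → Fin n => ∑ j, ((t j : ℕ) + 1) = n + 1)).filter
              (fun t => t 2 = m.rev),
          u (t 0) * v (t 1) := (Finset.sum_filter _ _).symm
      _ = ∑ p ∈ Finset.univ.filter
            (fun p : Fin n × Fin n => (p.1 : ℕ) + (p.2 : ℕ) + 1 = (m : ℕ)), u p.1 * v p.2 := by
          refine Finset.sum_nbij' (fun t => (t 0, t 1)) (fun p => ![p.1, p.2, m.rev])
            ?_ ?_ ?_ ?_ ?_
          · intro t ht
            simp only [Finset.mem_filter, Finset.mem_univ, true_and, Fin.sum_univ_three] at ht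
            obtain ⟨hsum, h2⟩ := ht
            simp only [Finset.mem_filter, Finset.mem_univ, true_and]
            have hb0 := (t 0).isLt
            have hb1 := (t 1).isLt
            have hbm := m.isLt
            have h2v : ((t 2 : ℕ)) = n - 1 - (m : ℕ) := by rw [h2, Fin.val_rev]; omega
            omega
          · intro p hp
            simp only [Finset.mem_filter, Finset.mem_univ, true_and] at hp
            simp only [Finset.mem_filter, Finset.mem_univ, true_and, Fin.sum_univ_three,
              Matrix.cons_val_zero, Matrix.cons_val_one, Matrix.head_cons, Matrix.cons_val_two,
              Matrix.tail_cons]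
            have hbm := m.isLt
            have hb1 := p.1.isLt
            have hb2 := p.2.isLt
            refine ⟨by rw [Fin.val_rev]; omega, trivial⟩
          · intro t ht
            simp only [Finset.mem_filter, Finset.mem_univ, true_and] at ht
            funext j
            fin_cases j <;> simp [ht.2]
          · intro p _
            simp
          · intro t _
            rfl
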